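/- arXiv:1503.01155 — 3 statements merged into one kernel-verified Lean document; each statement's English description precedes it below -/
import Mathlib

section
/- Under the standing assumption, every differentiable solution p : [0,∞) → ℝ^𝓖_{≥0} of the recombination dynamics with p(0) ∈ S_𝓖 converges, as t → ∞, to the unique equilibrium in the marginal compatibility class M(p(0)), namely the point q with q(g) = ∏_{i ∈ 𝓛} pᵢ(0)(gᵢ) for all g ∈ 𝓖, where pᵢ(0) are the marginals of the initial condition. -/
/-!
The marginal `margOn U p x` of a solution on a set `U` of loci obeys a closed equation: its
derivative is `½ ∑_{I separating U} c I (m_{U ∩ I} m_{U \ I} - m_U m_∅)`, which involves only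
marginals on strictly smaller sets. Marginals on at most one locus, and the total mass, are
therefore conserved. For larger `U`, strong induction makes the forcing term converge to
`R_U ∏_{i ∈ U} pᵢ(0)(xᵢ)` with `R_U = ½ ∑_{I separating U} c I > 0` by the standing assumption,
and the linear equation `f' = g - R_U f` drives `m_U` to `∏_{i ∈ U} pᵢ(0)(xᵢ)`; for `U = 𝓛` this
is the convergence of `p`. Uniqueness of the equilibrium follows by applying this to a constant
solution.
-/

open Finset

/-- Recombination of gametes `g` and `h` following pattern `{I, Iᶜ}`:
`(g_I h_J)ᵢ = gᵢ` for `i ∈ I` and `= hᵢ` for `i ∈ J = Iᶜ`. -/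
def recomb {L : Type} [DecidableEq L] {A : L → Type} (I : Finset L)
    (g h : ∀ i, A i) : ∀ i, A i :=
  fun i => if i ∈ I then g i else h i

/-- The recombination vector field
`F(p) = (1/2) Σ_{g,h} Σ_{{I,J} ∈ 𝓟} c({I,J}) p(g) p(h) (g_I h_J + g_J h_I − g − h)`,
where the sum over unordered patterns `{I,J}` is written as `(1/2) Σ_{I : Finset L}`
(every unordered pattern `{I, Iᶜ}` corresponds to exactly two subsets `I` and `Iᶜ`;
the rate constants satisfy `c I = c Iᶜ`). -/
noncomputable def recF {L : Type} [Fintype L] [DecidableEq L] {A : L → Type}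
    [∀ i, Fintype (A i)] [∀ i, DecidableEq (A i)]
    (c : Finset L → ℝ) (p : (∀ i, A i) → ℝ) : (∀ i, A i) → ℝ :=
  fun x => (1 / 4) * ∑ g : ∀ i, A i, ∑ h : ∀ i, A i, ∑ I : Finset L,
    c I * p g * p h *
      ((if x = recomb I g h then 1 else 0) + (if x = recomb Iᶜ g h then 1 else 0)
        - (if x = g then 1 else 0) - (if x = h then 1 else 0))

/-- The marginal frequency `pᵢ(a) = Σ_{g : gᵢ = a} p(g)`. -/
noncomputable def marg {L : Type} [Fintype L] [DecidableEq L] {A : L → Type}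
    [∀ i, Fintype (A i)] [∀ i, DecidableEq (A i)]
    (p : (∀ i, A i) → ℝ) (i : L) (a : A i) : ℝ :=
  ∑ g : ∀ j, A j, if g i = a then p g else 0

open Filter

open Topology

lemma recomb_agree_iff {L : Type} [DecidableEq L] {A : L → Type} (I U : Finset L)
    (a b x : ∀ i, A i) :
    (∀ i ∈ U, recomb I a b i = x i) ↔ (∀ i ∈ U ∩ I, a i = x i) ∧ (∀ i ∈ U \ I, b i = x i) := by
  simp only [recomb, Finset.mem_inter, Finset.mem_sdiff, and_imp]
  constructor
  · intro h
    exact ⟨fun i hU hI => by simpa [hI] using h i hU, fun i hU hI => by simpa [hI] using h i hU⟩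
  · rintro ⟨ha, hb⟩ i hU
    split_ifs with hI
    exacts [ha i hU hI, hb i hU hI]

section

variable {L : Type} [Fintype L] [DecidableEq L] {A : L → Type}
  [∀ i, Fintype (A i)] [∀ i, DecidableEq (A i)]

def margOn (U : Finset L) (p : (∀ i, A i) → ℝ) (x : ∀ i, A i) : ℝ :=
  ∑ g : ∀ i, A i, if ∀ i ∈ U, g i = x i then p g else 0

lemma margOn_empty (p : (∀ i, A i) → ℝ) (x : ∀ i, A i) : margOn ∅ p x = ∑ g, p g := by
  simp [margOn]

lemma margOn_univ (p : (∀ i, A i) → ℝ) (x : ∀ i, A i) : margOn univ p x = p x := by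
  simp [margOn, ← funext_iff]

lemma margOn_singleton (p : (∀ i, A i) → ℝ) (i : L) (x : ∀ i, A i) :
    margOn {i} p x = marg p i (x i) := by
  simp [margOn, marg]

lemma margOn_mul_margOn (V W : Finset L) (p : (∀ i, A i) → ℝ) (x : ∀ i, A i) :
    margOn V p x * margOn W p x = ∑ a, ∑ b,
      p a * p b * if (∀ i ∈ V, a i = x i) ∧ (∀ i ∈ W, b i = x i) then 1 else 0 := by
  simp only [margOn, Finset.sum_mul_sum, mul_boole, ite_zero_mul_ite_zero]

lemma margOn_recF (c : Finset L → ℝ) (p : (∀ i, A i) → ℝ) (U : Finset L) (x : ∀ i, A i) :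
    margOn U (recF c p) x = (1 / 2) * ∑ I, c I *
      (margOn (U ∩ I) p x * margOn (U \ I) p x - margOn U p x * margOn ∅ p x) := by
  have hexpand : margOn U (recF c p) x = (1 / 4) * ∑ a, ∑ b, ∑ I, c I * (p a * p b *
      ((if (∀ i ∈ U ∩ I, a i = x i) ∧ (∀ i ∈ U \ I, b i = x i) then 1 else 0)
        + (if (∀ i ∈ U \ I, a i = x i) ∧ (∀ i ∈ U ∩ I, b i = x i) then 1 else 0)
        - (if (∀ i ∈ U, a i = x i) ∧ (∀ i ∈ (∅ : Finset L), b i = x i) then 1 else 0)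
        - (if (∀ i ∈ (∅ : Finset L), a i = x i) ∧ (∀ i ∈ U, b i = x i) then 1 else 0))) := by
    simp only [margOn, recF, ← Finset.sum_filter, Finset.mul_sum]
    rw [Finset.sum_comm]
    refine Finset.sum_congr rfl fun a _ => ?_
    rw [Finset.sum_comm]
    refine Finset.sum_congr rfl fun b _ => ?_
    rw [Finset.sum_comm]
    refine Finset.sum_congr rfl fun I _ => ?_
    simp only [← Finset.mul_sum, mul_add, mul_sub, Finset.sum_add_distrib, Finset.sum_sub_distrib,
      Finset.sum_ite_eq', Finset.mem_filter, Finset.mem_univ, true_and, recomb_agree_iff,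
      ← Finset.sdiff_eq_inter_compl, sdiff_compl, Finset.inf_eq_inter, Finset.notMem_empty,
      IsEmpty.forall_iff, implies_true, and_true]
    ring
  rw [hexpand]
  simp_rw [Finset.sum_comm (α := Finset L), ← Finset.mul_sum]
  rw [Finset.mul_sum, Finset.mul_sum]
  refine Finset.sum_congr rfl fun I _ => ?_
  simp only [mul_sub, mul_add, Finset.sum_add_distrib, Finset.sum_sub_distrib, ← margOn_mul_margOn]
  ring

lemma margOn_pi_prod (F : ∀ i, A i → ℝ) (U : Finset L) (x : ∀ i, A i) :
    margOn U (fun g => ∏ i, F i (g i)) x = (∏ i ∈ U, F i (x i)) * ∏ i ∈ Uᶜ, ∑ a, F i a := by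
  have hsplit : ∀ g : ∀ i, A i, (if ∀ i ∈ U, g i = x i then ∏ i, F i (g i) else 0) =
      ∏ i, if i ∈ U → g i = x i then F i (g i) else 0 := by
    intro g
    simp [Finset.prod_ite_zero]
  rw [margOn, Finset.sum_congr rfl fun g _ => hsplit g, ← Fintype.prod_sum
    (fun i a => if i ∈ U → a = x i then F i a else 0), ← Finset.prod_mul_prod_compl U]
  congr 1
  · refine Finset.prod_congr rfl fun i hi => ?_
    simp [hi]
  · refine Finset.prod_congr rfl fun i hi => ?_
    simp [Finset.mem_compl.1 hi]

lemma sum_marg (p : (∀ i, A i) → ℝ) (i : L) : ∑ a, marg p i a = ∑ g, p g := by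
  simp only [marg]
  rw [Finset.sum_comm]
  simp

lemma marg_nonneg {p : (∀ i, A i) → ℝ} (hp : ∀ g, 0 ≤ p g) (i : L) (a : A i) : 0 ≤ marg p i a :=
  Finset.sum_nonneg fun g _ => by split_ifs <;> simp [hp g]

lemma marg_eq_of_margOn_singleton_eq {p r : (∀ i, A i) → ℝ}
    (h : ∀ (i : L) (x : ∀ i, A i), margOn {i} p x = margOn {i} r x) (i : L) (a : A i) :
    marg p i a = marg r i a := by
  rcases isEmpty_or_nonempty (∀ i, A i) with hG | ⟨⟨x⟩⟩
  · simp [marg]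
  · simpa [margOn_singleton] using h i (Function.update x i a)

def separating (U : Finset L) : Finset (Finset L) :=
  univ.filter fun I => U ∩ I ⊂ U ∧ U \ I ⊂ U

lemma margOn_recF_eq_sum_separating (c : Finset L → ℝ) (p : (∀ i, A i) → ℝ) (U : Finset L)
    (x : ∀ i, A i) :
    margOn U (recF c p) x = (1 / 2) * ∑ I ∈ separating U, c I *
      (margOn (U ∩ I) p x * margOn (U \ I) p x - margOn U p x * margOn ∅ p x) := by
  rw [margOn_recF, separating, Finset.sum_filter_of_ne]
  intro I _ hI
  by_contra hsep
  refine hI ?_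
  rcases not_and_or.1 hsep with h | h
  · have hUI : U ∩ I = U := (Finset.inter_subset_left.eq_or_ssubset).resolve_right h
    rw [hUI, Finset.sdiff_eq_empty_iff_subset.2 (Finset.inter_eq_left.1 hUI)]
    ring
  · have hUI : U \ I = U := (Finset.sdiff_subset.eq_or_ssubset).resolve_right h
    rw [hUI, Finset.disjoint_iff_inter_eq_empty.1 (Finset.sdiff_eq_self_iff_disjoint.1 hUI)]
    ring

lemma separating_eq_empty {U : Finset L} (hU : U.card ≤ 1) : separating U = ∅ := by
  refine Finset.filter_false_of_mem fun I _ ⟨h₁, h₂⟩ => ?_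
  obtain ⟨j, hjU, hjI⟩ := (Finset.ssubset_iff_of_subset Finset.inter_subset_left).1 h₁
  obtain ⟨i, hiU, hiI⟩ := (Finset.ssubset_iff_of_subset Finset.sdiff_subset).1 h₂
  have : 1 < U.card := Finset.one_lt_card.2 ⟨i, hiU, j, hjU, by grind⟩
  omega

lemma sum_separating_pos {c : Finset L → ℝ} (hc : ∀ I, 0 ≤ c I)
    (hsep : ∀ i j : L, i ≠ j → 0 < ∑ I ∈ univ.filter (fun I : Finset L => i ∈ I ∧ j ∉ I), c I)
    {U : Finset L} (hU : 1 < U.card) : 0 < ∑ I ∈ separating U, c I := by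
  obtain ⟨i, hi, j, hj, hij⟩ := Finset.one_lt_card.1 hU
  refine (hsep i j hij).trans_le
    (Finset.sum_le_sum_of_subset_of_nonneg (fun I hI => ?_) fun I _ _ => hc I)
  simp only [separating, Finset.mem_filter, Finset.mem_univ, true_and] at hI ⊢
  constructor
  · exact (Finset.ssubset_iff_of_subset Finset.inter_subset_left).2 ⟨j, hj, by simp [hI.2]⟩
  · exact (Finset.ssubset_iff_of_subset Finset.sdiff_subset).2 ⟨i, hi, by simp [hI.1]⟩

end

lemma eventually_lt_of_hasDerivAt_sub_mul {f g : ℝ → ℝ} {R u v : ℝ} (hR : 0 < R)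
    (hf : ∀ᶠ t in atTop, HasDerivAt f (g t - R * f t) t) (hg : ∀ᶠ t in atTop, g t ≤ u)
    (hv : u / R < v) : ∀ᶠ t in atTop, f t < v := by
  obtain ⟨T, hT⟩ := eventually_atTop.1 (hf.and hg)
  set φ : ℝ → ℝ := fun t => Real.exp (R * t) * (f t - u / R)
  have hφ : ∀ t ≥ T, HasDerivAt φ (Real.exp (R * t) * (g t - u)) t := fun t ht => by
    have hexp : HasDerivAt (fun s => Real.exp (R * s)) (Real.exp (R * t) * R) t := by
      simpa using ((hasDerivAt_id t).const_mul R).exp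
    refine (hexp.fun_mul ((hT t ht).1.sub_const (u / R))).congr_deriv ?_
    field_simp
    ring
  have hφ_anti : AntitoneOn φ (Set.Ici T) := by
    refine antitoneOn_of_hasDerivWithinAt_nonpos (f' := fun t => Real.exp (R * t) * (g t - u))
      (convex_Ici T) (fun t ht => (hφ t ht).continuousAt.continuousWithinAt)
      (fun t ht => ?_) (fun t ht => ?_)
    · rw [interior_Ici] at ht
      exact (hφ t (le_of_lt ht)).hasDerivWithinAt
    · rw [interior_Ici] at ht
      exact mul_nonpos_of_nonneg_of_nonpos (Real.exp_pos _).le (sub_nonpos.2 (hT t ht.le).2)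
  have hdecay : Tendsto (fun t => Real.exp (-(R * t)) * φ T) atTop (𝓝 0) := by
    simpa using (Real.tendsto_exp_atBot.comp
      (tendsto_neg_atTop_atBot.comp (tendsto_id.const_mul_atTop hR))).mul_const (φ T)
  filter_upwards [eventually_ge_atTop T, hdecay.eventually (gt_mem_nhds (sub_pos.2 hv))]
    with t htT hsmall
  have hft : f t - u / R = Real.exp (-(R * t)) * φ t := by
    simp only [φ, Real.exp_neg]
    field_simp
  have : Real.exp (-(R * t)) * φ t ≤ Real.exp (-(R * t)) * φ T :=
    mul_le_mul_of_nonneg_left (hφ_anti Set.self_mem_Ici htT htT) (Real.exp_pos _).le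
  linarith

lemma tendsto_of_hasDerivAt_sub_mul {f g : ℝ → ℝ} {R l : ℝ} (hR : 0 < R)
    (hf : ∀ᶠ t in atTop, HasDerivAt f (g t - R * f t) t) (hg : Tendsto g atTop (𝓝 l)) :
    Tendsto f atTop (𝓝 (l / R)) := by
  refine tendsto_order.2 ⟨fun v hv => ?_, fun v hv => ?_⟩
  · obtain ⟨u, hlu, huv⟩ := exists_between (show -l < -v * R by
      rw [lt_div_iff₀ hR] at hv; linarith)
    have hf' : ∀ᶠ t in atTop, HasDerivAt (fun t => -f t) (-g t - R * -f t) t :=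
      hf.mono fun t ht => ht.neg.congr_deriv (by ring)
    have hg' : ∀ᶠ t in atTop, -g t ≤ u :=
      (hg.neg.eventually (gt_mem_nhds hlu)).mono fun _ => le_of_lt
    filter_upwards [eventually_lt_of_hasDerivAt_sub_mul hR hf' hg' ((div_lt_iff₀ hR).2 huv)]
      with t ht
    linarith
  · obtain ⟨u, hlu, huv⟩ := exists_between (show l < v * R from (div_lt_iff₀ hR).1 hv)
    exact eventually_lt_of_hasDerivAt_sub_mul hR hf
      ((hg.eventually (gt_mem_nhds hlu)).mono fun _ => le_of_lt) ((div_lt_iff₀ hR).2 huv)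

section

variable {L : Type} [Fintype L] [DecidableEq L] {A : L → Type}
  [∀ i, Fintype (A i)] [∀ i, DecidableEq (A i)]

lemma hasDerivAt_margOn {p : ℝ → (∀ i, A i) → ℝ} {p' : (∀ i, A i) → ℝ} {t : ℝ}
    (hp : HasDerivAt p p' t) (U : Finset L) (x : ∀ i, A i) :
    HasDerivAt (fun s => margOn U (p s) x) (margOn U p' x) t := by
  unfold margOn
  refine HasDerivAt.fun_sum fun g _ => ?_
  split_ifs
  · exact hasDerivAt_pi.1 hp g
  · exact hasDerivAt_const t 0

lemma margOn_eq_of_card_le_one {c : Finset L → ℝ} {p : ℝ → (∀ i, A i) → ℝ}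
    (hode : ∀ t, 0 ≤ t → HasDerivAt p (recF c (p t)) t) {U : Finset L} (hU : U.card ≤ 1)
    (x : ∀ i, A i) {t : ℝ} (ht : 0 ≤ t) : margOn U (p t) x = margOn U (p 0) x := by
  have hderiv : ∀ s, 0 ≤ s → HasDerivAt (fun s => margOn U (p s) x) 0 s := fun s hs => by
    simpa [margOn_recF_eq_sum_separating, separating_eq_empty hU] using
      hasDerivAt_margOn (hode s hs) U x
  exact constant_of_has_deriv_right_zero
    (fun s hs => (hderiv s hs.1).continuousAt.continuousWithinAt)
    (fun s hs => (hderiv s hs.1).hasDerivWithinAt) t ⟨ht, le_rfl⟩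

lemma margOn_eq_prod_marg_of_card_le_one {p : (∀ i, A i) → ℝ} (hp : ∑ g, p g = 1)
    {U : Finset L} (hU : U.card ≤ 1) (x : ∀ i, A i) :
    margOn U p x = ∏ i ∈ U, marg p i (x i) := by
  rcases U.eq_empty_or_nonempty with rfl | hne
  · simp [margOn_empty, hp]
  · obtain ⟨i, rfl⟩ := Finset.card_eq_one.1 (le_antisymm hU hne.card_pos)
    simp [margOn_singleton]

theorem tendsto_margOn {c : Finset L → ℝ} (hc : ∀ I, 0 ≤ c I)
    (hsep : ∀ i j : L, i ≠ j → 0 < ∑ I ∈ univ.filter (fun I : Finset L => i ∈ I ∧ j ∉ I), c I)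
    {p : ℝ → (∀ i, A i) → ℝ} (hode : ∀ t, 0 ≤ t → HasDerivAt p (recF c (p t)) t)
    (hp1 : ∑ g, p 0 g = 1) (U : Finset L) (x : ∀ i, A i) :
    Tendsto (fun t => margOn U (p t) x) atTop (𝓝 (∏ i ∈ U, marg (p 0) i (x i))) := by
  induction U using Finset.strongInduction with
  | H U ih =>
  rcases le_or_gt U.card 1 with hU | hU
  · refine tendsto_const_nhds.congr' ?_
    filter_upwards [eventually_ge_atTop 0] with t ht
    rw [margOn_eq_of_card_le_one hode hU x ht, margOn_eq_prod_marg_of_card_le_one hp1 hU]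
  set R := (1 / 2) * ∑ I ∈ separating U, c I
  set G : ℝ → ℝ := fun t => (1 / 2) * ∑ I ∈ separating U,
    c I * (margOn (U ∩ I) (p t) x * margOn (U \ I) (p t) x)
  have hR : 0 < R := by have := sum_separating_pos hc hsep hU; positivity
  have hderiv : ∀ᶠ t in atTop,
      HasDerivAt (fun t => margOn U (p t) x) (G t - R * margOn U (p t) x) t := by
    filter_upwards [eventually_ge_atTop 0] with t ht
    have hmass : margOn ∅ (p t) x = 1 := by
      rw [margOn_eq_of_card_le_one hode (by simp) x ht, margOn_empty, hp1]
    convert hasDerivAt_margOn (hode t ht) U x using 1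
    simp only [margOn_recF_eq_sum_separating, hmass, G, R, mul_one, mul_sub,
      Finset.sum_sub_distrib, ← Finset.sum_mul]
    ring
  have hG : Tendsto G atTop (𝓝 (R * ∏ i ∈ U, marg (p 0) i (x i))) := by
    simp only [G, R, mul_assoc, Finset.sum_mul]
    refine (tendsto_finsetSum _ fun I hI => ?_).const_mul _
    simp only [separating, Finset.mem_filter] at hI
    rw [← Finset.prod_inter_mul_prod_sdiff U I]
    exact ((ih _ hI.2.1).mul (ih _ hI.2.2)).const_mul (c I)
  simpa [hR.ne'] using tendsto_of_hasDerivAt_sub_mul hR hderiv hG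

lemma recF_pi_prod_eq_zero (c : Finset L → ℝ) {F : ∀ i, A i → ℝ} (hF : ∀ i, ∑ a, F i a = 1) :
    recF c (fun g => ∏ i, F i (g i)) = 0 := by
  funext x
  rw [← margOn_univ (recF c _) x, margOn_recF]
  simp [margOn_pi_prod, hF, ← Finset.compl_eq_univ_sdiff, Finset.prod_mul_prod_compl]

theorem eq_pi_prod_marg_of_recF_eq_zero {c : Finset L → ℝ} (hc : ∀ I, 0 ≤ c I)
    (hsep : ∀ i j : L, i ≠ j → 0 < ∑ I ∈ univ.filter (fun I : Finset L => i ∈ I ∧ j ∉ I), c I)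
    {r : (∀ i, A i) → ℝ} (hr : recF c r = 0) (hr1 : ∑ g, r g = 1) :
    r = fun g => ∏ i, marg r i (g i) := by
  funext x
  have hstat : ∀ t : ℝ, 0 ≤ t → HasDerivAt (fun _ => r) (recF c r) t := fun t _ => by
    simpa [hr] using hasDerivAt_const t r
  have := tendsto_margOn hc hsep hstat hr1 univ x
  simp only [margOn_univ] at this
  exact tendsto_nhds_unique tendsto_const_nhds this

end

theorem convergence_to_product_of_marginals_general
    {L : Type} [Fintype L] [DecidableEq L] [Nonempty L]
    (A : L → Type) [∀ i, Fintype (A i)] [∀ i, DecidableEq (A i)]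
    (c : Finset L → ℝ) (hc : ∀ I, 0 ≤ c I)
    (hsep : ∀ i j : L, i ≠ j →
      0 < ∑ I ∈ univ.filter (fun I : Finset L => i ∈ I ∧ j ∉ I), c I)
    (p : ℝ → (∀ i, A i) → ℝ)
    (hnn : ∀ t, 0 ≤ t → ∀ g, 0 ≤ p t g)
    (hode : ∀ t, 0 ≤ t → HasDerivAt p (recF c (p t)) t)
    (hp1 : ∑ g : ∀ i, A i, p 0 g = 1)
    (q : (∀ i, A i) → ℝ) (hq : q = fun g => ∏ i : L, marg (p 0) i (g i)) :
    ((∀ g, 0 ≤ q g) ∧ (∀ (i : L) (a : A i), marg q i a = marg (p 0) i a) ∧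
      recF c q = 0 ∧
      (∀ r : (∀ i, A i) → ℝ, (∀ g, 0 ≤ r g) →
        (∀ (i : L) (a : A i), marg r i a = marg (p 0) i a) → recF c r = 0 → r = q)) ∧
    Tendsto p atTop (nhds q) := by
  have hmarg : ∀ i, ∑ a, marg (p 0) i a = 1 := fun i => (sum_marg _ i).trans hp1
  have hq_marg : ∀ i a, marg q i a = marg (p 0) i a :=
    marg_eq_of_margOn_singleton_eq fun i x => by simp [hq, margOn_pi_prod, hmarg, margOn_singleton]
  refine ⟨⟨fun g => hq ▸ Finset.prod_nonneg fun i _ => marg_nonneg (hnn 0 le_rfl) i (g i),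
    hq_marg, hq ▸ recF_pi_prod_eq_zero c hmarg, fun r _ hr hrF => ?_⟩, ?_⟩
  · obtain ⟨i⟩ := ‹Nonempty L›
    have hr1 : ∑ g, r g = 1 := by simp only [← sum_marg r i, hr, hmarg]
    rw [eq_pi_prod_marg_of_recF_eq_zero hc hsep hrF hr1, hq]
    simp only [hr]
  · refine tendsto_pi_nhds.2 fun x => ?_
    simpa [margOn_univ, hq] using tendsto_margOn hc hsep hode hp1 univ x

/-- **Global convergence in every marginal compatibility class (Theorem 5).**
Under the standing assumption, every differentiable nonnegative solution of the
recombination dynamics starting in the simplex `S_𝓖` converges, as `t → ∞`, to the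
unique equilibrium in the marginal compatibility class `M(p(0))`, namely the point
`q(g) = ∏ᵢ pᵢ(0)(gᵢ)`, the product of the marginals of the initial condition. -/
theorem convergence_to_product_of_marginals
    {L : Type} [Fintype L] [DecidableEq L] [Nonempty L]
    (A : L → Type) [∀ i, Fintype (A i)] [∀ i, DecidableEq (A i)]
    (hA : ∀ i, 2 ≤ Fintype.card (A i))
    (c : Finset L → ℝ) (hc : ∀ I, 0 ≤ c I) (hcsym : ∀ I, c I = c Iᶜ)
    (hsep : ∀ i j : L, i ≠ j →
      0 < ∑ I ∈ univ.filter (fun I : Finset L => i ∈ I ∧ j ∉ I), c I)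
    (p : ℝ → (∀ i, A i) → ℝ)
    (hnn : ∀ t, 0 ≤ t → ∀ g, 0 ≤ p t g)
    (hode : ∀ t, 0 ≤ t → HasDerivAt p (recF c (p t)) t)
    (hp1 : ∑ g : ∀ i, A i, p 0 g = 1)
    (q : (∀ i, A i) → ℝ) (hq : q = fun g => ∏ i : L, marg (p 0) i (g i)) :
    ((∀ g, 0 ≤ q g) ∧ (∀ (i : L) (a : A i), marg q i a = marg (p 0) i a) ∧
      recF c q = 0 ∧
      (∀ r : (∀ i, A i) → ℝ, (∀ g, 0 ≤ r g) →
        (∀ (i : L) (a : A i), marg r i a = marg (p 0) i a) → recF c r = 0 → r = q)) ∧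
    Tendsto p atTop (nhds q) :=
  convergence_to_product_of_marginals_general A c hc hsep p hnn hode hp1 q hq
end

section
/- Under the standing assumption, the entropy H(p) = −Σ_{g ∈ 𝓖} p(g) ln p(g) is a Lyapunov function for the recombination dynamics: along any differentiable solution p : [0,∞) → ℝ^𝓖_{>0} ∩ S_𝓖, the function t ↦ H(p(t)) is non-decreasing, and for each t, dH(p(t))/dt = 0 if and only if p(t) is an equilibrium (equivalently, p(t)(g) = ∏_{i ∈ 𝓛} p(t)ᵢ(gᵢ) for all g ∈ 𝓖). -/
open Finset

/-!
Write `a(g, h) = p(g) p(h)` and `σ_I(g, h) = (g_I h_J, h_I g_J)` for the involution of pairs of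
gametes given by a pattern. Testing the vector field against `w` and symmetrising over `σ_I`
gives `Σ_x F(p)(x) w(x) = -(1/8) Σ_I c_I Σ_z (a(σ_I z) - a(z)) (W(σ_I z) - W(z))` with
`W(g, h) = w(g) + w(h)`. For `w = log p` we have `W = log a`, so the entropy production is a sum
of terms `(x - y)(log x - log y) ≥ 0`; it vanishes iff `a ∘ σ_I = a` whenever `c_I ≠ 0`. Since such
patterns separate any two loci, splitting a gamete along them shows that `p` is a product of
one-locus factors, hence of its marginals; and every product distribution is a rest point.
-/

open Real

lemma Function.Involutive.sum_mul_sub_eq {ι : Type*} [Fintype ι] {σ : ι → ι}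
    (hσ : Function.Involutive σ) (u v : ι → ℝ) :
    ∑ z, u z * (v (σ z) - v z) = -(1 / 2) * ∑ z, (u (σ z) - u z) * (v (σ z) - v z) := by
  have reindex : ∀ w : ι → ℝ, ∑ z, w (σ z) = ∑ z, w z := fun w => Equiv.sum_comp hσ.toPerm w
  have h₁ := reindex fun z => u z * v (σ z)
  have h₂ := reindex fun z => u z * v z
  simp only [hσ _] at h₁ h₂
  simp only [mul_sub, sub_mul, sum_sub_distrib, ← h₂] at h₁ ⊢
  linarith

section Recombination

variable {L : Type} [DecidableEq L] {A : L → Type}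

@[simp]
lemma recomb_empty (g h : ∀ i, A i) : recomb ∅ g h = h := by
  funext i; simp [recomb]

lemma recomb_singleton (i : L) (g h : ∀ i, A i) :
    recomb {i} g h = Function.update h i (g i) := by
  funext j; by_cases hj : j = i
  · subst hj; simp [recomb]
  · simp [recomb, hj]

def recombPair (I : Finset L) (z : (∀ i, A i) × (∀ i, A i)) : (∀ i, A i) × (∀ i, A i) :=
  (recomb I z.1 z.2, recomb I z.2 z.1)

lemma recombPair_involutive (I : Finset L) : Function.Involutive (recombPair (A := A) I) := by
  rintro ⟨g, h⟩
  ext i <;> by_cases hi : i ∈ I <;> simp [recombPair, recomb, hi]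

def RecombInvariant (q : (∀ i, A i) → ℝ) (I : Finset L) : Prop :=
  ∀ g h, q (recomb I g h) * q (recomb I h g) = q g * q h

variable [Fintype L]

@[simp]
lemma recomb_univ (g h : ∀ i, A i) : recomb univ g h = g := by
  funext i; simp [recomb]

lemma recomb_compl (I : Finset L) (g h : ∀ i, A i) : recomb Iᶜ g h = recomb I h g := by
  funext i; by_cases hi : i ∈ I <;> simp [recomb, hi]

end Recombination

section RecombinationField

variable {L : Type} [Fintype L] [DecidableEq L] {A : L → Type}
  [∀ i, Fintype (A i)] [∀ i, DecidableEq (A i)]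

lemma sum_recF_mul (c : Finset L → ℝ) (q w : (∀ i, A i) → ℝ) :
    ∑ x, recF c q x * w x = (1 / 4) * ∑ I, c I * ∑ z, q z.1 * q z.2 *
      ((w (recombPair I z).1 + w (recombPair I z).2) - (w z.1 + w z.2)) := by
  have hδ : ∀ y, ∑ x, (if x = y then (1 : ℝ) else 0) * w x = w y := fun y => by simp [ite_mul]
  calc ∑ x, recF c q x * w x
      = (1 / 4) * ∑ g, ∑ h, ∑ I, c I * q g * q h *
          (w (recomb I g h) + w (recomb I h g) - w g - w h) := by
        simp only [recF, recomb_compl, sum_mul, mul_sum]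
        rw [sum_comm]; refine sum_congr rfl fun g _ => ?_
        rw [sum_comm]; refine sum_congr rfl fun h _ => ?_
        rw [sum_comm]; refine sum_congr rfl fun I _ => ?_
        simp only [mul_assoc, ← mul_sum]
        simp only [add_mul, sub_mul, sum_add_distrib, sum_sub_distrib, hδ]
    _ = (1 / 4) * ∑ I, c I * ∑ z, q z.1 * q z.2 *
          ((w (recombPair I z).1 + w (recombPair I z).2) - (w z.1 + w z.2)) := by
        rw [sum_comm_cycle]; congr 1; refine sum_congr rfl fun I _ => ?_
        rw [Fintype.sum_prod_type, mul_sum]; refine sum_congr rfl fun g _ => ?_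
        rw [mul_sum]; exact sum_congr rfl fun h _ => by simp only [recombPair]; ring

lemma sum_recF_mul_eq_symmetrized (c : Finset L → ℝ) (q w : (∀ i, A i) → ℝ) :
    ∑ x, recF c q x * w x = -(1 / 8) * ∑ I, c I * ∑ z,
      (q (recombPair I z).1 * q (recombPair I z).2 - q z.1 * q z.2) *
        ((w (recombPair I z).1 + w (recombPair I z).2) - (w z.1 + w z.2)) := by
  simp only [sum_recF_mul, fun I => (recombPair_involutive (A := A) I).sum_mul_sub_eq
    (fun z => q z.1 * q z.2) (fun z => w z.1 + w z.2), mul_sum]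
  ring_nf

lemma sum_recF (c : Finset L → ℝ) (q : (∀ i, A i) → ℝ) : ∑ x, recF c q x = 0 := by
  simpa using sum_recF_mul_eq_symmetrized c q 1

lemma recF_eq_zero_of_recombInvariant {c : Finset L → ℝ} {q : (∀ i, A i) → ℝ}
    (hq : ∀ I, c I ≠ 0 → RecombInvariant q I) : recF c q = 0 := by
  funext x
  have hx := sum_recF_mul_eq_symmetrized c q fun y => if y = x then 1 else 0
  simp only [mul_ite, mul_one, mul_zero, sum_ite_eq', mem_univ, if_true] at hx
  rw [hx, Pi.zero_apply, sum_eq_zero, mul_zero]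
  intro I _
  by_cases hI : c I = 0
  · rw [hI, zero_mul]
  · refine mul_eq_zero_of_right _ (sum_eq_zero fun z _ => ?_)
    rw [show q (recombPair I z).1 * q (recombPair I z).2 = q z.1 * q z.2 from
      hq I hI z.1 z.2, sub_self, zero_mul]

end RecombinationField

lemma sub_mul_log_sub_log_nonneg {x y : ℝ} (hx : 0 < x) (hy : 0 < y) :
    0 ≤ (x - y) * (log x - log y) := by
  rcases le_total x y with h | h
  · exact mul_nonneg_of_nonpos_of_nonpos (sub_nonpos.2 h) (sub_nonpos.2 (log_le_log hx h))
  · exact mul_nonneg (sub_nonneg.2 h) (sub_nonneg.2 (log_le_log hy h))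

lemma sub_mul_log_sub_log_eq_zero_iff {x y : ℝ} (hx : 0 < x) (hy : 0 < y) :
    (x - y) * (log x - log y) = 0 ↔ x = y := by
  rw [mul_eq_zero, sub_eq_zero, sub_eq_zero, log_injOn_pos.eq_iff hx hy, or_self]

section EntropyProduction

variable {L : Type} [Fintype L] [DecidableEq L] {A : L → Type}
  [∀ i, Fintype (A i)] [∀ i, DecidableEq (A i)]

noncomputable def entropyProduction (c : Finset L → ℝ) (q : (∀ i, A i) → ℝ) : ℝ :=
  -∑ x, recF c q x * log (q x)

lemma entropyProduction_eq {c : Finset L → ℝ} {q : (∀ i, A i) → ℝ} (hq : ∀ g, 0 < q g) :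
    entropyProduction c q = (1 / 8) * ∑ I, c I * ∑ z,
      (q (recombPair I z).1 * q (recombPair I z).2 - q z.1 * q z.2) *
        (log (q (recombPair I z).1 * q (recombPair I z).2) - log (q z.1 * q z.2)) := by
  simp only [entropyProduction, sum_recF_mul_eq_symmetrized, log_mul (hq _).ne' (hq _).ne']
  ring

lemma entropyProduction_nonneg {c : Finset L → ℝ} (hc : ∀ I, 0 ≤ c I)
    {q : (∀ i, A i) → ℝ} (hq : ∀ g, 0 < q g) : 0 ≤ entropyProduction c q := by
  rw [entropyProduction_eq hq]
  exact mul_nonneg (by norm_num) <| sum_nonneg fun I _ => mul_nonneg (hc I) <|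
    sum_nonneg fun z _ => sub_mul_log_sub_log_nonneg
      (mul_pos (hq _) (hq _)) (mul_pos (hq _) (hq _))

lemma recombInvariant_of_entropyProduction_eq_zero {c : Finset L → ℝ} (hc : ∀ I, 0 ≤ c I)
    {q : (∀ i, A i) → ℝ} (hq : ∀ g, 0 < q g) (h0 : entropyProduction c q = 0)
    {I : Finset L} (hI : c I ≠ 0) : RecombInvariant q I := by
  have hpos : ∀ z : (∀ i, A i) × (∀ i, A i), 0 < q z.1 * q z.2 := fun z => mul_pos (hq _) (hq _)
  have hterm : ∀ J z, 0 ≤ (q (recombPair J z).1 * q (recombPair J z).2 - q z.1 * q z.2) *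
      (log (q (recombPair J z).1 * q (recombPair J z).2) - log (q z.1 * q z.2)) :=
    fun J z => sub_mul_log_sub_log_nonneg (hpos _) (hpos z)
  rw [entropyProduction_eq hq, mul_eq_zero, sum_eq_zero_iff_of_nonneg fun J _ =>
    mul_nonneg (hc J) (sum_nonneg fun z _ => hterm J z)] at h0
  have hI0 := (mul_eq_zero.1 (h0.resolve_left (by norm_num) I (mem_univ I))).resolve_left hI
  rw [sum_eq_zero_iff_of_nonneg fun z _ => hterm I z] at hI0
  exact fun g h =>
    (sub_mul_log_sub_log_eq_zero_iff (hpos _) (hpos (g, h))).1 (hI0 (g, h) (mem_univ _))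

end EntropyProduction

section ProductForm

variable {L : Type} [DecidableEq L] {A : L → Type} {q : (∀ i, A i) → ℝ}

lemma RecombInvariant.recomb_inter_mul_recomb_sdiff {I : Finset L} (hI : RecombInvariant q I)
    (S : Finset L) (g r : ∀ i, A i) :
    q (recomb (S ∩ I) g r) * q (recomb (S \ I) g r) = q (recomb S g r) * q r := by
  have hinter : recomb I (recomb S g r) r = recomb (S ∩ I) g r := by
    funext i; by_cases hi : i ∈ I <;> by_cases hs : i ∈ S <;> simp [recomb, hi, hs]
  have hsdiff : recomb I r (recomb S g r) = recomb (S \ I) g r := by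
    funext i; by_cases hi : i ∈ I <;> by_cases hs : i ∈ S <;> simp [recomb, hi, hs]
  rw [← hinter, ← hsdiff, hI]

lemma mul_pow_card_eq_mul_prod_of_separating (hq : ∀ g, q g ≠ 0)
    (hsep : ∀ i j, i ≠ j → ∃ I, RecombInvariant q I ∧ i ∈ I ∧ j ∉ I) (g r : ∀ i, A i)
    (S : Finset L) :
    q (recomb S g r) * q r ^ #S = q r * ∏ i ∈ S, q (Function.update r i (g i)) := by
  induction S using Finset.strongInduction with
  | H S ih =>
  obtain rfl | hS := S.eq_empty_or_nonempty
  · simp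
  obtain ⟨i, rfl⟩ | ⟨i, hi, j, hj, hij⟩ := hS.exists_eq_singleton_or_nontrivial
  · simp [recomb_singleton, mul_comm]
  -- `S` has two loci; splitting it along a pattern separating them leaves two smaller sets
  obtain ⟨I, hI, hiI, hjI⟩ := hsep i j hij
  have hinter := ih (S ∩ I) (Finset.ssubset_iff_subset_ne.2 ⟨inter_subset_left,
    fun h => hjI (mem_of_mem_inter_right (h ▸ hj))⟩)
  have hsdiff := ih (S \ I) (Finset.ssubset_iff_subset_ne.2 ⟨sdiff_subset,
    fun h => (mem_sdiff.1 (h ▸ hi)).2 hiI⟩)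
  have hsplit := hI.recomb_inter_mul_recomb_sdiff S g r
  rw [← card_inter_add_card_sdiff S I, pow_add, ← prod_inter_mul_prod_sdiff S I]
  apply mul_right_cancel₀ (hq r)
  linear_combination -(q r ^ #(S ∩ I) * q r ^ #(S \ I)) * hsplit
    + q (recomb (S \ I) g r) * q r ^ #(S \ I) * hinter
    + q r * (∏ i ∈ S ∩ I, q (Function.update r i (g i))) * hsdiff

lemma recombInvariant_of_eq_prod [Fintype L] {f : ∀ i, A i → ℝ}
    (hq : ∀ g, q g = ∏ i, f i (g i)) (I : Finset L) :
    RecombInvariant q I := by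
  intro g h
  simp only [hq, ← prod_mul_distrib]
  refine prod_congr rfl fun i _ => ?_
  by_cases hi : i ∈ I <;> simp [recomb, hi, mul_comm]

end ProductForm

section Marginals

variable {L : Type} [Fintype L] [DecidableEq L] {A : L → Type} [∀ i, Fintype (A i)]
  {q : (∀ i, A i) → ℝ} {C : ℝ} {f : ∀ i, A i → ℝ}

lemma sum_eq_mul_prod_sum (hq : ∀ g, q g = C * ∏ i, f i (g i)) :
    ∑ g, q g = C * ∏ i, ∑ a, f i a := by
  simp only [hq, ← mul_sum, prod_univ_sum, Fintype.piFinset_univ]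

variable [∀ i, DecidableEq (A i)]

lemma marg_mul_sum_eq (hq : ∀ g, q g = C * ∏ i, f i (g i)) (i : L) (a : A i) :
    marg q i a * ∑ b, f i b = f i a * ∑ g, q g := by
  let t : ∀ j, Finset (A j) := Function.update (fun _ => univ) i {a}
  have hfiber : marg q i a = ∑ g ∈ Fintype.piFinset t, q g := by
    rw [marg, ← sum_filter]
    congr 1
    ext g
    simp only [mem_filter, mem_univ, true_and, Fintype.mem_piFinset]
    refine ⟨fun hg j => ?_, fun hg => by simpa [t] using hg i⟩
    by_cases hj : j = i
    · subst hj; simp [t, hg]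
    · simp [t, hj]
  have ht : ∀ j, ∑ b ∈ t j, f j b = Function.update (fun j => ∑ b, f j b) i (f i a) j := by
    intro j
    by_cases hj : j = i
    · subst hj; simp [t]
    · simp [t, hj]
  rw [sum_eq_mul_prod_sum hq, hfiber, sum_congr rfl fun g _ => hq g, ← mul_sum,
    ← prod_univ_sum, Fintype.prod_eq_mul_prod_compl i, Fintype.prod_eq_mul_prod_compl i]
  simp only [ht, Function.update_self,
    prod_update_of_notMem (notMem_compl.2 (mem_singleton_self i))]
  ring

lemma eq_prod_marg_of_eq_mul_prod (hq : ∀ g, q g = C * ∏ i, f i (g i))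
    (hf : ∀ i, ∑ b, f i b ≠ 0) (hq1 : ∑ g, q g = 1) (g : ∀ i, A i) :
    q g = ∏ i, marg q i (g i) := by
  have hmarg : ∀ i a, marg q i a = f i a / ∑ b, f i b := fun i a => by
    rw [eq_div_iff (hf i), marg_mul_sum_eq hq, hq1, mul_one]
  have hC : C * ∏ i, ∑ b, f i b = 1 := (sum_eq_mul_prod_sum hq).symm.trans hq1
  rw [prod_congr rfl fun i _ => hmarg i (g i), prod_div_distrib,
    eq_div_iff (prod_ne_zero_iff.2 fun i _ => hf i), hq, mul_right_comm, hC, one_mul]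

lemma eq_prod_marg_of_separating (hq : ∀ g, 0 < q g) (hq1 : ∑ g, q g = 1)
    (hsep : ∀ i j, i ≠ j → ∃ I, RecombInvariant q I ∧ i ∈ I ∧ j ∉ I) (g : ∀ i, A i) :
    q g = ∏ i, marg q i (g i) := by
  obtain ⟨r⟩ : Nonempty (∀ i, A i) := by
    by_contra h
    rw [not_nonempty_iff] at h
    simp at hq1
  have hprod : ∀ g, q g = q r / q r ^ Fintype.card L * ∏ i, q (Function.update r i (g i)) := by
    intro g
    have h := mul_pow_card_eq_mul_prod_of_separating (fun g => (hq g).ne') hsep g r univ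
    rw [recomb_univ, card_univ] at h
    rw [div_mul_eq_mul_div, eq_div_iff (pow_ne_zero _ (hq r).ne'), h]
  exact eq_prod_marg_of_eq_mul_prod hprod
    (fun i => (sum_pos (fun a _ => hq _) ⟨r i, mem_univ _⟩).ne') hq1 g

end Marginals

section Equilibria

variable {L : Type} [Fintype L] [DecidableEq L] {A : L → Type}
  [∀ i, Fintype (A i)] [∀ i, DecidableEq (A i)] {c : Finset L → ℝ} {q : (∀ i, A i) → ℝ}

lemma entropyProduction_eq_zero_iff_eq_prod_marg (hc : ∀ I, 0 ≤ c I)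
    (hsep : ∀ i j : L, i ≠ j → 0 < ∑ I ∈ univ.filter (fun I : Finset L => i ∈ I ∧ j ∉ I), c I)
    (hq : ∀ g, 0 < q g) (hq1 : ∑ g, q g = 1) :
    entropyProduction c q = 0 ↔ ∀ g, q g = ∏ i, marg q i (g i) := by
  refine ⟨fun h0 => eq_prod_marg_of_separating hq hq1 fun i j hij => ?_, fun hprod => ?_⟩
  · obtain ⟨I, hI, hcI⟩ := exists_ne_zero_of_sum_ne_zero (hsep i j hij).ne'
    exact ⟨I, recombInvariant_of_entropyProduction_eq_zero hc hq h0 hcI, (mem_filter.1 hI).2⟩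
  · rw [entropyProduction, recF_eq_zero_of_recombInvariant fun I _ =>
      recombInvariant_of_eq_prod hprod I]
    simp

lemma entropyProduction_eq_zero_iff_recF_eq_zero (hc : ∀ I, 0 ≤ c I)
    (hsep : ∀ i j : L, i ≠ j → 0 < ∑ I ∈ univ.filter (fun I : Finset L => i ∈ I ∧ j ∉ I), c I)
    (hq : ∀ g, 0 < q g) (hq1 : ∑ g, q g = 1) :
    entropyProduction c q = 0 ↔ recF c q = 0 := by
  refine ⟨fun h0 => recF_eq_zero_of_recombInvariant fun I _ => recombInvariant_of_eq_prod
    ((entropyProduction_eq_zero_iff_eq_prod_marg hc hsep hq hq1).1 h0) I, fun h => ?_⟩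
  simp [entropyProduction, h]

end Equilibria

lemma hasDerivAt_neg_sum_mul_log {ι : Type*} [Fintype ι] {p : ℝ → ι → ℝ} {p' : ι → ℝ}
    {t : ℝ} (hp : HasDerivAt p p' t) (hpt : ∀ i, p t i ≠ 0) (hp' : ∑ i, p' i = 0) :
    HasDerivAt (fun s => -∑ i, p s i * log (p s i)) (-∑ i, p' i * log (p t i)) t := by
  have h := (HasDerivAt.fun_sum (u := univ) fun i _ =>
    (hasDerivAt_mul_log (hpt i)).comp t (hasDerivAt_pi.1 hp i)).neg
  have hval : ∑ i, (log (p t i) + 1) * p' i = ∑ i, p' i * log (p t i) := by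
    simp only [add_mul, one_mul, sum_add_distrib, hp', add_zero, mul_comm (log _)]
  rwa [hval] at h

theorem entropy_is_lyapunov_function_general
    {L : Type} [Fintype L] [DecidableEq L]
    (A : L → Type) [∀ i, Fintype (A i)] [∀ i, DecidableEq (A i)]
    (c : Finset L → ℝ) (hc : ∀ I, 0 ≤ c I)
    (hsep : ∀ i j : L, i ≠ j →
      0 < ∑ I ∈ univ.filter (fun I : Finset L => i ∈ I ∧ j ∉ I), c I)
    (p : ℝ → (∀ i, A i) → ℝ)
    (hpos : ∀ t, 0 ≤ t → ∀ g, 0 < p t g)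
    (hsum : ∀ t, 0 ≤ t → ∑ g : ∀ i, A i, p t g = 1)
    (hode : ∀ t, 0 ≤ t → HasDerivAt p (recF c (p t)) t) :
    (∀ t₁ t₂, 0 ≤ t₁ → t₁ ≤ t₂ →
      -∑ g : ∀ i, A i, p t₁ g * Real.log (p t₁ g)
        ≤ -∑ g : ∀ i, A i, p t₂ g * Real.log (p t₂ g)) ∧
    (∀ t, 0 ≤ t → ∃ d : ℝ,
      HasDerivAt (fun s => -∑ g : ∀ i, A i, p s g * Real.log (p s g)) d t ∧
      0 ≤ d ∧
      (d = 0 ↔ recF c (p t) = 0) ∧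
      (d = 0 ↔ ∀ g : ∀ i, A i, p t g = ∏ i : L, marg (p t) i (g i))) := by
  have hderiv : ∀ t, 0 ≤ t → HasDerivAt (fun s => -∑ g, p s g * log (p s g))
      (entropyProduction c (p t)) t := fun t ht =>
    hasDerivAt_neg_sum_mul_log (hode t ht) (fun g => (hpos t ht g).ne') (sum_recF c (p t))
  have hmono : MonotoneOn (fun s => -∑ g, p s g * log (p s g)) (Set.Ici 0) :=
    monotoneOn_of_hasDerivWithinAt_nonneg (convex_Ici 0)
      (fun t ht => (hderiv t ht).continuousAt.continuousWithinAt)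
      (fun t ht => (hderiv t (interior_subset ht)).hasDerivWithinAt)
      (fun t ht => entropyProduction_nonneg hc (hpos t (interior_subset ht)))
  refine ⟨fun t₁ t₂ ht₁ ht₁₂ => hmono ht₁ (ht₁.trans ht₁₂) ht₁₂, fun t ht =>
    ⟨_, hderiv t ht, entropyProduction_nonneg hc (hpos t ht),
      entropyProduction_eq_zero_iff_recF_eq_zero hc hsep (hpos t ht) (hsum t ht),
      entropyProduction_eq_zero_iff_eq_prod_marg hc hsep (hpos t ht) (hsum t ht)⟩⟩

/-- **The entropy is a Lyapunov function for the recombination dynamics.**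
Under the standing assumption, along any differentiable strictly positive solution in the
simplex, the entropy `H(p) = −Σ_g p(g) ln p(g)` is non-decreasing in `t`, and its
derivative vanishes at time `t` exactly when `p(t)` is an equilibrium, equivalently, when
`p(t)` is the product of its marginals. -/
theorem entropy_is_lyapunov_function
    {L : Type} [Fintype L] [DecidableEq L] [Nonempty L]
    (A : L → Type) [∀ i, Fintype (A i)] [∀ i, DecidableEq (A i)]
    (hA : ∀ i, 2 ≤ Fintype.card (A i))
    (c : Finset L → ℝ) (hc : ∀ I, 0 ≤ c I) (hcsym : ∀ I, c I = c Iᶜ)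
    (hsep : ∀ i j : L, i ≠ j →
      0 < ∑ I ∈ univ.filter (fun I : Finset L => i ∈ I ∧ j ∉ I), c I)
    (p : ℝ → (∀ i, A i) → ℝ)
    (hpos : ∀ t, 0 ≤ t → ∀ g, 0 < p t g)
    (hsum : ∀ t, 0 ≤ t → ∑ g : ∀ i, A i, p t g = 1)
    (hode : ∀ t, 0 ≤ t → HasDerivAt p (recF c (p t)) t) :
    (∀ t₁ t₂, 0 ≤ t₁ → t₁ ≤ t₂ →
      -∑ g : ∀ i, A i, p t₁ g * Real.log (p t₁ g)
        ≤ -∑ g : ∀ i, A i, p t₂ g * Real.log (p t₂ g)) ∧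
    (∀ t, 0 ≤ t → ∃ d : ℝ,
      HasDerivAt (fun s => -∑ g : ∀ i, A i, p s g * Real.log (p s g)) d t ∧
      0 ≤ d ∧
      (d = 0 ↔ recF c (p t) = 0) ∧
      (d = 0 ↔ ∀ g : ∀ i, A i, p t g = ∏ i : L, marg (p t) i (g i))) :=
  entropy_is_lyapunov_function_general A c hc hsep p hpos hsum hode
end

section
/- Assume c({I,J}) > 0 for every recombination pattern {I,J} ∈ 𝓟. Consider the graph whose vertices are the complexes, i.e., unordered pairs {g,h} of gametes with |Δ(g,h)| ≥ 2, and with an edge between {g,h} and {g_I h_J, g_J h_I} for each {I,J} ∈ 𝓟 such that {g_I h_J, g_J h_I} ≠ {g,h}. Then two complexes {g,h} and {g',h'} lie in the same connected component if and only if {gᵢ, hᵢ} = {g'ᵢ, h'ᵢ} (as unordered pairs of alleles) for every locus i ∈ 𝓛; moreover, any two distinct complexes in the same connected component are joined by an edge, i.e., every linkage class is a complete graph. -/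
open Finset

/-- An edge of the graph of complexes: the unordered pairs (complexes) `v` and `w` are
joined by an edge if `v = {g, h}` and `w = {g_I h_J, g_J h_I}` for some recombination
pattern `{I, J}` (with `J = Iᶜ`) such that `w ≠ v`. -/
def complexEdge {L : Type} [Fintype L] [DecidableEq L] {A : L → Type} :
    Sym2 (∀ i, A i) → Sym2 (∀ i, A i) → Prop :=
  fun v w => ∃ (g h : ∀ i, A i) (I : Finset L),
    v = s(g, h) ∧ w = s(recomb I g h, recomb Iᶜ g h) ∧ w ≠ v

/-- The per-locus allele-pair invariant of a complex. -/
noncomputable def pairAt {L : Type} {A : L → Type} :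
    Sym2 (∀ i, A i) → ∀ i, Sym2 (A i) :=
  Sym2.lift ⟨fun a b i => s(a i, b i), fun a b => funext fun i => Sym2.eq_swap⟩

@[simp] lemma pairAt_mk {L : Type} {A : L → Type} (a b : ∀ i, A i) :
    pairAt s(a, b) = fun i => s(a i, b i) := rfl

lemma pairAt_edge {L : Type} [Fintype L] [DecidableEq L] {A : L → Type}
    {v w : Sym2 (∀ i, A i)} (e : complexEdge v w) : pairAt v = pairAt w := by
  obtain ⟨a, b, I, hv, hw, -⟩ := e
  subst hv; subst hw
  funext i
  simp only [pairAt_mk, recomb]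
  by_cases hi : i ∈ I
  · simp [hi]
  · simp [hi, Sym2.eq_swap]

/-- **Linkage classes are complete graphs.**
Assume `c({I,J}) > 0` for every pattern. In the graph on complexes (unordered pairs
`{g,h}` of gametes differing at ≥ 2 loci, with an edge to `{g_I h_J, g_J h_I}` for every
pattern whenever this pair differs from `{g,h}`), two complexes `{g,h}` and `{g',h'}` lie
in the same connected component if and only if `{gᵢ, hᵢ} = {g'ᵢ, h'ᵢ}` as unordered pairs
of alleles for every locus `i`; moreover, any two distinct complexes in the same
connected component are joined by an edge. -/

theorem linkage_classes_complete
    {L : Type} [Fintype L] [DecidableEq L] (hL : 2 ≤ Fintype.card L)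
    (A : L → Type) [∀ i, Fintype (A i)] [∀ i, DecidableEq (A i)]
    (hA : ∀ i, 2 ≤ Fintype.card (A i))
    (c : Finset L → ℝ) (hcsym : ∀ I, c I = c Iᶜ) (hc : ∀ I : Finset L, 0 < c I)
    (g h g' h' : ∀ i, A i)
    (hgh : 2 ≤ (univ.filter fun i : L => g i ≠ h i).card)
    (hgh' : 2 ≤ (univ.filter fun i : L => g' i ≠ h' i).card) :
    (Relation.ReflTransGen
        (fun v w : Sym2 (∀ i, A i) => complexEdge v w ∨ complexEdge w v)
        s(g, h) s(g', h') ↔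
      ∀ i : L, s(g i, h i) = s(g' i, h' i)) ∧
    (Relation.ReflTransGen
        (fun v w : Sym2 (∀ i, A i) => complexEdge v w ∨ complexEdge w v)
        s(g, h) s(g', h') →
      s(g, h) ≠ s(g', h') →
      complexEdge s(g, h) s(g', h') ∨ complexEdge s(g', h') s(g, h)) := by
  have key : ∀ v w : Sym2 (∀ i, A i),
      Relation.ReflTransGen
        (fun v w : Sym2 (∀ i, A i) => complexEdge v w ∨ complexEdge w v) v w →
      pairAt v = pairAt w := by
    intro v w hvw
    induction hvw with
    | refl => rfl
    | tail _ e ih =>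
      rcases e with e | e
      · exact ih.trans (pairAt_edge e)
      · exact ih.trans (pairAt_edge e).symm
  have direct : (∀ i : L, s(g i, h i) = s(g' i, h' i)) →
      s(g, h) ≠ s(g', h') → complexEdge s(g, h) s(g', h') := by
    intro hp hne
    refine ⟨g, h, univ.filter (fun i => g' i = g i), rfl, ?_, hne.symm⟩
    have hg' : recomb (univ.filter (fun i => g' i = g i)) g h = g' := by
      funext i
      simp only [recomb, mem_filter, mem_univ, true_and]
      by_cases hi : g' i = g i
      · simp [hi]
      · simp only [hi, if_false]
        rcases Sym2.eq_iff.mp (hp i) with ⟨h1, h2⟩ | ⟨h1, h2⟩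
        · exact absurd h1.symm hi
        · exact h2
    have hh' : recomb (univ.filter (fun i => g' i = g i))ᶜ g h = h' := by
      funext i
      simp only [recomb, mem_compl, mem_filter, mem_univ, true_and]
      by_cases hi : g' i = g i
      · simp only [hi, not_true, if_false]
        rcases Sym2.eq_iff.mp (hp i) with ⟨h1, h2⟩ | ⟨h1, h2⟩
        · exact h2
        · exact h2.trans (hi.trans h1)
      · simp only [hi, not_false_iff, if_true]
        rcases Sym2.eq_iff.mp (hp i) with ⟨h1, h2⟩ | ⟨h1, h2⟩
        · exact absurd h1.symm hi
        · exact h1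
    rw [hg', hh']
  constructor
  · constructor
    · intro hrt i
      have := congrFun (key _ _ hrt) i
      simpa using this
    · intro hp
      by_cases hne : s(g, h) = s(g', h')
      · rw [hne]
      · exact Relation.ReflTransGen.single (Or.inl (direct hp hne))
  · intro hrt hne
    have hp : ∀ i : L, s(g i, h i) = s(g' i, h' i) := by
      intro i; have := congrFun (key _ _ hrt) i; simpa using this
    exact Or.inl (direct hp hne)
end
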